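/- arXiv:1204.5846 — 5 statements merged into one kernel-verified Lean document; each statement's English description precedes it below -/
import Mathlib

section
/- For each H ∈ A(W) choose a linear form α_H on V with kernel H, and set Q := ∏_{H∈A(W)} α_H, Q∨ := ∏_{H∈A(W)} α_H^{e_H−1}, and Disc := ∏_{H∈A(W)} α_H^{e_H}, regarded as polynomial functions on V. If the coset element wφ is ζ-regular, then Q∘(wφ) = ζ^Nhyp·Q, Q∨∘(wφ) = ζ^Nref·Q∨, and Disc∘(wφ) = ζ^{e_W}·Disc (where Q∘g denotes the function v ↦ Q(g(v))). -/
/-!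
The element `g = wφ` normalizes `W`, so `H ↦ g⁻¹(H)` permutes `A(W)` and preserves `e_H`, and
`α_H ∘ g` has the same kernel `g⁻¹(H)` as `α_{g⁻¹(H)}`, hence is a multiple of it. Therefore, for
exponents `k_H` constant along this permutation, `∏ α_H ^ k_H` is multiplied by a constant `C`
under `g`; evaluating at a regular `ζ`-eigenvector, where no `α_H` vanishes, gives
`C = ζ ^ ∑ k_H`. It remains to count: a reflection lies in `W_H` for exactly one `H` (its fixed
hyperplane), and every non-identity element of `W_H` is a reflection, so `∑ (e_H - 1) = Nref`.
-/

namespace Stmt1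

variable {V : Type*} [AddCommGroup V] [Module ℂ V]

/-- A reflection: an invertible linear endomorphism of finite order whose
fixed-point subspace is a hyperplane. -/
def IsReflection (g : (V →ₗ[ℂ] V)ˣ) : Prop :=
  IsOfFinOrder g ∧
    Module.finrank ℂ (LinearMap.ker ((g : V →ₗ[ℂ] V) - LinearMap.id)) + 1 =
      Module.finrank ℂ V

/-- The set `A(W)` of reflecting hyperplanes of `W`. -/
def reflectingHyperplanes (W : Subgroup (V →ₗ[ℂ] V)ˣ) : Set (Submodule ℂ V) :=
  {H | ∃ g ∈ W, IsReflection g ∧ LinearMap.ker ((g : V →ₗ[ℂ] V) - LinearMap.id) = H}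

/-- `e_H`, the order of the pointwise stabilizer of `H` in `W`. -/
noncomputable def orderH (W : Subgroup (V →ₗ[ℂ] V)ˣ) (H : Submodule ℂ V) : ℕ :=
  Nat.card {g : (V →ₗ[ℂ] V)ˣ // g ∈ W ∧ ∀ x ∈ H, (g : V →ₗ[ℂ] V) x = x}

/-- `Nhyp`, the number of reflecting hyperplanes of `W`. -/
noncomputable def Nhyp (W : Subgroup (V →ₗ[ℂ] V)ˣ) : ℕ :=
  Nat.card (reflectingHyperplanes W)

/-- `Nref`, the number of reflections in `W`. -/
noncomputable def Nref (W : Subgroup (V →ₗ[ℂ] V)ˣ) : ℕ :=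
  Nat.card {g : (V →ₗ[ℂ] V)ˣ // g ∈ W ∧ IsReflection g}

/-- The set of regular vectors: those lying on no reflecting hyperplane. -/
def Vreg (W : Subgroup (V →ₗ[ℂ] V)ˣ) : Set V :=
  {v : V | ∀ H ∈ reflectingHyperplanes W, v ∉ H}

/-- `W` is generated by the reflections it contains. -/
def GeneratedByReflections (W : Subgroup (V →ₗ[ℂ] V)ˣ) : Prop :=
  W = Subgroup.closure {g : (V →ₗ[ℂ] V)ˣ | g ∈ W ∧ IsReflection g}

open Module Submodule

section SemiInvariant

variable {𝕜 E ι : Type*} [Field 𝕜] [AddCommGroup E] [Module 𝕜 E]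

theorem exists_prod_comp_eq_mul {s : Finset ι} {σ : ι → ι} (hσ : Set.BijOn σ s s)
    (f : ι → E →ₗ[𝕜] 𝕜) (g : E →ₗ[𝕜] E)
    (hker : ∀ i ∈ s, LinearMap.ker (f (σ i)) ≤ LinearMap.ker ((f i).comp g))
    (k : ι → ℕ) (hk : ∀ i ∈ s, k (σ i) = k i) :
    ∃ C : 𝕜, ∀ x, ∏ i ∈ s, f i (g x) ^ k i = C * ∏ i ∈ s, f i x ^ k i := by
  have hprop : ∀ i ∈ s, ∃ c : 𝕜, c • f (σ i) = (f i).comp g := fun i hi => by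
    have := mem_span_of_iInf_ker_le_ker (L := fun _ : Unit => f (σ i)) (by simpa using hker i hi)
    simpa [Submodule.mem_span_singleton] using this
  choose! c hc using hprop
  refine ⟨∏ i ∈ s, c i ^ k i, fun x => ?_⟩
  calc ∏ i ∈ s, f i (g x) ^ k i = ∏ i ∈ s, c i ^ k i * f (σ i) x ^ k (σ i) :=
        Finset.prod_congr rfl fun i hi => by
          rw [hk i hi, ← mul_pow, ← LinearMap.comp_apply, ← hc i hi, LinearMap.smul_apply,
            smul_eq_mul]
    _ = (∏ i ∈ s, c i ^ k i) * ∏ i ∈ s, f i x ^ k i := by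
        rw [Finset.prod_mul_distrib]
        congr 1
        exact Finset.prod_nbij σ hσ.mapsTo hσ.injOn hσ.surjOn fun _ _ => rfl

theorem prod_comp_eq_pow_sum_mul {s : Finset ι} {σ : ι → ι} (hσ : Set.BijOn σ s s)
    (f : ι → E →ₗ[𝕜] 𝕜) (g : E →ₗ[𝕜] E)
    (hker : ∀ i ∈ s, LinearMap.ker (f (σ i)) ≤ LinearMap.ker ((f i).comp g))
    (k : ι → ℕ) (hk : ∀ i ∈ s, k (σ i) = k i) {v : E} {ζ : 𝕜} (hv : g v = ζ • v)
    (hfv : ∀ i ∈ s, f i v ≠ 0) (x : E) :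
    ∏ i ∈ s, f i (g x) ^ k i = ζ ^ (∑ i ∈ s, k i) * ∏ i ∈ s, f i x ^ k i := by
  obtain ⟨C, hC⟩ := exists_prod_comp_eq_mul hσ f g hker k hk
  have hCv : ∏ i ∈ s, f i (g v) ^ k i = ζ ^ (∑ i ∈ s, k i) * ∏ i ∈ s, f i v ^ k i := by
    simp only [hv, map_smul, smul_eq_mul, mul_pow, Finset.prod_mul_distrib,
      Finset.prod_pow_eq_pow_sum]
  have hne : ∏ i ∈ s, f i v ^ k i ≠ 0 :=
    Finset.prod_ne_zero_iff.mpr fun i hi => pow_ne_zero _ (hfv i hi)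
  rw [hC, mul_right_cancel₀ hne ((hC v).symm.trans hCv)]

end SemiInvariant

theorem ker_conj_sub_id (g u : (V →ₗ[ℂ] V)ˣ) :
    LinearMap.ker (((g⁻¹ * u * g : (V →ₗ[ℂ] V)ˣ) : V →ₗ[ℂ] V) - LinearMap.id) =
      comap (g : V →ₗ[ℂ] V) (LinearMap.ker ((u : V →ₗ[ℂ] V) - LinearMap.id)) := by
  ext x
  simp only [LinearMap.mem_ker, mem_comap, LinearMap.sub_apply, LinearMap.id_apply, sub_eq_zero,
    Units.val_mul, Module.End.mul_apply]
  exact inv_smul_eq_iff (g := g)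

theorem finrank_comap_units (g : (V →ₗ[ℂ] V)ˣ) (K : Submodule ℂ V) :
    finrank ℂ (comap (g : V →ₗ[ℂ] V) K) = finrank ℂ K := by
  have := (LinearMap.GeneralLinearGroup.generalLinearEquiv ℂ V g).symm.finrank_map_eq K
  rwa [← comap_equiv_eq_map_symm, LinearMap.GeneralLinearGroup.generalLinearEquiv_to_linearMap]
    at this

theorem IsReflection.conj {u : (V →ₗ[ℂ] V)ˣ} (hu : IsReflection u) (g : (V →ₗ[ℂ] V)ˣ) :
    IsReflection (g⁻¹ * u * g) :=
  ⟨(isConj_iff.mpr ⟨g⁻¹, by rw [inv_inv]⟩).isOfFinOrder hu.1, by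
    rw [ker_conj_sub_id, finrank_comap_units]; exact hu.2⟩

theorem comap_comap_units_inv (g : (V →ₗ[ℂ] V)ˣ) (K : Submodule ℂ V) :
    comap (g : V →ₗ[ℂ] V) (comap ((g⁻¹ : (V →ₗ[ℂ] V)ˣ) : V →ₗ[ℂ] V) K) = K := by
  ext x
  exact iff_of_eq (congrArg (· ∈ K) (inv_smul_smul g x))

section PointwiseStabilizer

variable (W : Subgroup (V →ₗ[ℂ] V)ˣ)

def pointwiseStabilizer (H : Submodule ℂ V) : Set (V →ₗ[ℂ] V)ˣ :=
  {u | u ∈ W ∧ ∀ x ∈ H, (u : V →ₗ[ℂ] V) x = x}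

theorem orderH_eq_ncard (H : Submodule ℂ V) : orderH W H = (pointwiseStabilizer W H).ncard :=
  Nat.card_coe_set_eq _

theorem Nhyp_eq_finsum : Nhyp W = ∑ᶠ H ∈ reflectingHyperplanes W, 1 :=
  (Nat.card_coe_set_eq _).trans finsum_one.symm

end PointwiseStabilizer

section Normalizer

variable {W : Subgroup (V →ₗ[ℂ] V)ˣ} {g : (V →ₗ[ℂ] V)ˣ}

theorem comap_mem_reflectingHyperplanes (hg : g ∈ Subgroup.normalizer (W : Set (V →ₗ[ℂ] V)ˣ))
    {H : Submodule ℂ V} (hH : H ∈ reflectingHyperplanes W) :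
    comap (g : V →ₗ[ℂ] V) H ∈ reflectingHyperplanes W := by
  obtain ⟨s, hsW, hs, rfl⟩ := hH
  exact ⟨g⁻¹ * s * g, (Subgroup.mem_normalizer_iff''.mp hg s).mp hsW, hs.conj g,
    ker_conj_sub_id g s⟩

theorem bijOn_comap_reflectingHyperplanes
    (hg : g ∈ Subgroup.normalizer (W : Set (V →ₗ[ℂ] V)ˣ)) :
    Set.BijOn (comap (g : V →ₗ[ℂ] V)) (reflectingHyperplanes W) (reflectingHyperplanes W) :=
  ⟨fun _ hH => comap_mem_reflectingHyperplanes hg hH,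
    (comap_injective_of_surjective fun y => ⟨_, smul_inv_smul g y⟩).injOn,
    fun H hH => ⟨_, comap_mem_reflectingHyperplanes (Subgroup.inv_mem _ hg) hH,
      comap_comap_units_inv g H⟩⟩

theorem mem_pointwiseStabilizer_comap_iff
    (hg : g ∈ Subgroup.normalizer (W : Set (V →ₗ[ℂ] V)ˣ)) (H : Submodule ℂ V) (u : (V →ₗ[ℂ] V)ˣ) :
    u ∈ pointwiseStabilizer W (comap (g : V →ₗ[ℂ] V) H) ↔
      g * u * g⁻¹ ∈ pointwiseStabilizer W H := by
  refine and_congr (Subgroup.mem_normalizer_iff.mp hg u) ⟨fun hu y hy => ?_, fun hu x hx => ?_⟩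
  · have hfix : u • g⁻¹ • y = g⁻¹ • y := hu _ (show g • g⁻¹ • y ∈ H by rwa [smul_inv_smul])
    show g • u • g⁻¹ • y = y
    rw [hfix, smul_inv_smul]
  · have hfix : g • u • g⁻¹ • g • x = g • x := hu _ hx
    rwa [inv_smul_smul, smul_left_cancel_iff] at hfix

theorem orderH_comap (hg : g ∈ Subgroup.normalizer (W : Set (V →ₗ[ℂ] V)ˣ))
    (H : Submodule ℂ V) : orderH W (comap (g : V →ₗ[ℂ] V) H) = orderH W H :=
  Nat.card_congr <| (MulAut.conj g).toEquiv.subtypeEquiv (mem_pointwiseStabilizer_comap_iff hg H)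

end Normalizer

section Counting

variable (W : Subgroup (V →ₗ[ℂ] V)ˣ) [Finite W]

theorem reflectingHyperplanes_finite : (reflectingHyperplanes W).Finite := by
  refine ((W : Set (V →ₗ[ℂ] V)ˣ).toFinite.image
    fun u : (V →ₗ[ℂ] V)ˣ => LinearMap.ker ((u : V →ₗ[ℂ] V) - LinearMap.id)).subset ?_
  rintro _ ⟨s, hsW, -, hks⟩
  exact ⟨s, hsW, hks⟩

theorem pointwiseStabilizer_finite (H : Submodule ℂ V) : (pointwiseStabilizer W H).Finite :=
  (W : Set (V →ₗ[ℂ] V)ˣ).toFinite.subset fun _ hu => hu.1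

theorem orderH_pos (H : Submodule ℂ V) : 0 < orderH W H := by
  rw [orderH_eq_ncard, Set.ncard_pos (pointwiseStabilizer_finite W H)]
  exact ⟨1, W.one_mem, fun _ _ => rfl⟩

variable {W} [FiniteDimensional ℂ V]

theorem isReflection_of_mem_pointwiseStabilizer {H : Submodule ℂ V}
    (hH : H ∈ reflectingHyperplanes W) {u : (V →ₗ[ℂ] V)ˣ}
    (hu : u ∈ pointwiseStabilizer W H) (hu1 : u ≠ 1) :
    IsReflection u ∧ LinearMap.ker ((u : V →ₗ[ℂ] V) - LinearMap.id) = H := by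
  obtain ⟨s, -, hs, rfl⟩ := hH
  have hle : LinearMap.ker ((s : V →ₗ[ℂ] V) - LinearMap.id) ≤
      LinearMap.ker ((u : V →ₗ[ℂ] V) - LinearMap.id) := fun x hx => by
    simp [hu.2 x hx]
  have hne_top : LinearMap.ker ((u : V →ₗ[ℂ] V) - LinearMap.id) ≠ ⊤ := fun htop =>
    hu1 <| Units.ext <| sub_eq_zero.mp (LinearMap.ker_eq_top.mp htop)
  have heq := Submodule.eq_of_le_of_finrank_le hle <| by
    have := Submodule.finrank_lt hne_top
    have := hs.2
    omega
  exact ⟨⟨W.subtype.isOfFinOrder (isOfFinOrder_of_finite (⟨u, hu.1⟩ : W)), heq ▸ hs.2⟩, heq.symm⟩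

theorem reflections_eq_biUnion :
    {u | u ∈ W ∧ IsReflection u} =
      ⋃ H ∈ reflectingHyperplanes W, pointwiseStabilizer W H \ {1} := by
  ext u
  simp only [Set.mem_ofPred_eq, Set.mem_iUnion, Set.mem_sdiff, Set.mem_singleton_iff, exists_prop]
  constructor
  · rintro ⟨huW, hu⟩
    refine ⟨_, ⟨u, huW, hu, rfl⟩, ⟨huW, fun x hx => ?_⟩, ?_⟩
    · simpa [sub_eq_zero] using hx
    · rintro rfl
      have := hu.2
      rw [Units.val_one, Module.End.one_eq_id, sub_self, LinearMap.ker_zero, finrank_top] at this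
      omega
  · rintro ⟨H, hH, hu, hu1⟩
    exact ⟨hu.1, (isReflection_of_mem_pointwiseStabilizer hH hu hu1).1⟩

theorem Nref_eq_finsum : Nref W = ∑ᶠ H ∈ reflectingHyperplanes W, (orderH W H - 1) := by
  calc Nref W = {u | u ∈ W ∧ IsReflection u}.ncard := Nat.card_coe_set_eq _
    _ = ∑ᶠ H ∈ reflectingHyperplanes W, (pointwiseStabilizer W H \ {1}).ncard := by
      rw [reflections_eq_biUnion]
      refine (reflectingHyperplanes_finite W).ncard_biUnion
        (fun H _ => (pointwiseStabilizer_finite W H).sdiff) fun H hH H' hH' hne => ?_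
      refine Set.disjoint_left.mpr fun u hu hu' => hne ?_
      rw [← (isReflection_of_mem_pointwiseStabilizer hH hu.1 hu.2).2,
        (isReflection_of_mem_pointwiseStabilizer hH' hu'.1 hu'.2).2]
    _ = ∑ᶠ H ∈ reflectingHyperplanes W, (orderH W H - 1) := finsum_mem_congr rfl fun H _ => by
      rw [orderH_eq_ncard,
        Set.ncard_sdiff_singleton_of_mem (s := pointwiseStabilizer W H) ⟨W.one_mem, fun _ _ => rfl⟩]

theorem Nref_add_Nhyp : Nref W + Nhyp W = ∑ᶠ H ∈ reflectingHyperplanes W, orderH W H := by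
  rw [Nref_eq_finsum, Nhyp_eq_finsum, ← finsum_mem_add_distrib (reflectingHyperplanes_finite W)]
  exact finsum_mem_congr rfl fun H _ => Nat.sub_add_cancel (orderH_pos W H)

end Counting

theorem finprod_comp_eq_pow_finsum_mul {W : Subgroup (V →ₗ[ℂ] V)ˣ} [Finite W]
    {g : (V →ₗ[ℂ] V)ˣ} (hg : g ∈ Subgroup.normalizer (W : Set (V →ₗ[ℂ] V)ˣ))
    {α : Submodule ℂ V → (V →ₗ[ℂ] ℂ)}
    (hα : ∀ H ∈ reflectingHyperplanes W, LinearMap.ker (α H) = H)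
    {v : V} (hv : v ∈ Vreg W) {ζ : ℂ} (hζ : (g : V →ₗ[ℂ] V) v = ζ • v)
    (k : Submodule ℂ V → ℕ)
    (hk : ∀ H ∈ reflectingHyperplanes W, k (comap (g : V →ₗ[ℂ] V) H) = k H) (x : V) :
    ∏ᶠ H ∈ reflectingHyperplanes W, α H ((g : V →ₗ[ℂ] V) x) ^ k H =
      ζ ^ (∑ᶠ H ∈ reflectingHyperplanes W, k H) *
        ∏ᶠ H ∈ reflectingHyperplanes W, α H x ^ k H := by
  have hA := reflectingHyperplanes_finite W
  rw [finprod_mem_eq_finite_toFinset_prod _ hA, finprod_mem_eq_finite_toFinset_prod _ hA,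
    finsum_mem_eq_finite_toFinset_sum _ hA]
  refine prod_comp_eq_pow_sum_mul (σ := comap (g : V →ₗ[ℂ] V))
    (by simpa using bijOn_comap_reflectingHyperplanes hg) α g ?_ k (by simpa using hk) hζ ?_ x
  · intro H hH
    rw [Set.Finite.mem_toFinset] at hH
    rw [LinearMap.ker_comp, hα H hH, hα _ (comap_mem_reflectingHyperplanes hg hH)]
  · intro H hH hvH
    rw [Set.Finite.mem_toFinset] at hH
    exact hv H hH (hα H hH ▸ hvH)

theorem statement1_general [FiniteDimensional ℂ V]
    (W : Subgroup (V →ₗ[ℂ] V)ˣ) [Finite W]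
    (φ : (V →ₗ[ℂ] V)ˣ)
    (hφW : ∀ g : (V →ₗ[ℂ] V)ˣ, φ * g * φ⁻¹ ∈ W ↔ g ∈ W)
    (α : Submodule ℂ V → (V →ₗ[ℂ] ℂ))
    (hα : ∀ H ∈ reflectingHyperplanes W, LinearMap.ker (α H) = H)
    (ζ : ℂ) (w : (V →ₗ[ℂ] V)ˣ) (hw : w ∈ W)
    (hreg : ∃ v ∈ Vreg W, ((w * φ : (V →ₗ[ℂ] V)ˣ) : V →ₗ[ℂ] V) v = ζ • v) :
    (∀ x : V,
      (∏ᶠ H ∈ reflectingHyperplanes W,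
          α H (((w * φ : (V →ₗ[ℂ] V)ˣ) : V →ₗ[ℂ] V) x)) =
        ζ ^ Nhyp W * ∏ᶠ H ∈ reflectingHyperplanes W, α H x) ∧
    (∀ x : V,
      (∏ᶠ H ∈ reflectingHyperplanes W,
          α H (((w * φ : (V →ₗ[ℂ] V)ˣ) : V →ₗ[ℂ] V) x) ^ (orderH W H - 1)) =
        ζ ^ Nref W * ∏ᶠ H ∈ reflectingHyperplanes W, α H x ^ (orderH W H - 1)) ∧
    (∀ x : V,
      (∏ᶠ H ∈ reflectingHyperplanes W,
          α H (((w * φ : (V →ₗ[ℂ] V)ˣ) : V →ₗ[ℂ] V) x) ^ orderH W H) =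
        ζ ^ (Nref W + Nhyp W) * ∏ᶠ H ∈ reflectingHyperplanes W, α H x ^ orderH W H) := by
  obtain ⟨v, hv, hζ⟩ := hreg
  have hg : w * φ ∈ Subgroup.normalizer (W : Set (V →ₗ[ℂ] V)ˣ) :=
    mul_mem (Subgroup.le_normalizer hw) (Subgroup.mem_normalizer_iff.mpr fun u => (hφW u).symm)
  have key := finprod_comp_eq_pow_finsum_mul hg hα hv hζ
  refine ⟨fun x => ?_, fun x => ?_, fun x => ?_⟩
  · simpa [Nhyp_eq_finsum] using key (fun _ => 1) (fun _ _ => rfl) x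
  · rw [Nref_eq_finsum]
    exact key (fun H => orderH W H - 1) (fun H _ => by rw [orderH_comap hg]) x
  · rw [Nref_add_Nhyp]
    exact key (orderH W) (fun H _ => orderH_comap hg H) x

/-- If `wφ` is `ζ`-regular then `Q ∘ (wφ) = ζ ^ Nhyp • Q`, `Q∨ ∘ (wφ) = ζ ^ Nref • Q∨`
and `Disc ∘ (wφ) = ζ ^ e_W • Disc`, where `Q`, `Q∨` and `Disc` are the products of the
chosen linear forms `α_H` with exponents `1`, `e_H - 1` and `e_H` respectively. -/
theorem statement1 [FiniteDimensional ℂ V] (hV : 0 < Module.finrank ℂ V)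
    (W : Subgroup (V →ₗ[ℂ] V)ˣ) [Finite W] (hgen : GeneratedByReflections W)
    (φ : (V →ₗ[ℂ] V)ˣ) (hφ : IsOfFinOrder φ)
    (hφW : ∀ g : (V →ₗ[ℂ] V)ˣ, φ * g * φ⁻¹ ∈ W ↔ g ∈ W)
    (α : Submodule ℂ V → (V →ₗ[ℂ] ℂ))
    (hα : ∀ H ∈ reflectingHyperplanes W, LinearMap.ker (α H) = H)
    (ζ : ℂ) (w : (V →ₗ[ℂ] V)ˣ) (hw : w ∈ W)
    (hreg : ∃ v ∈ Vreg W, ((w * φ : (V →ₗ[ℂ] V)ˣ) : V →ₗ[ℂ] V) v = ζ • v) :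
    (∀ x : V,
      (∏ᶠ H ∈ reflectingHyperplanes W,
          α H (((w * φ : (V →ₗ[ℂ] V)ˣ) : V →ₗ[ℂ] V) x)) =
        ζ ^ Nhyp W * ∏ᶠ H ∈ reflectingHyperplanes W, α H x) ∧
    (∀ x : V,
      (∏ᶠ H ∈ reflectingHyperplanes W,
          α H (((w * φ : (V →ₗ[ℂ] V)ˣ) : V →ₗ[ℂ] V) x) ^ (orderH W H - 1)) =
        ζ ^ Nref W * ∏ᶠ H ∈ reflectingHyperplanes W, α H x ^ (orderH W H - 1)) ∧
    (∀ x : V,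
      (∏ᶠ H ∈ reflectingHyperplanes W,
          α H (((w * φ : (V →ₗ[ℂ] V)ˣ) : V →ₗ[ℂ] V) x) ^ orderH W H) =
        ζ ^ (Nref W + Nhyp W) * ∏ᶠ H ∈ reflectingHyperplanes W, α H x ^ orderH W H) :=
  statement1_general W φ hφW α hα ζ w hw hreg

end Stmt1
end

section
/- Suppose K is a subfield of ℝ. For each H ∈ A(W) choose a linear form α_H on V with kernel H and set Disc := ∏_{H∈A(W)} α_H^{e_H}, a polynomial function on V (over such a real field every e_H equals 2). Then Disc∘φ = Disc, i.e. φ fixes the discriminant of W; equivalently, the root of unity Δ by which φ rescales Disc equals 1 for a real reflection coset. -/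
/-!
Over an ordered field the pointwise stabilizer of `H ∈ A(W)` is `{1, s_H}`: its elements act on
the line `V ⧸ H` by `±1`, and this sign determines them. Hence `e_H = 2` and `Disc = ∏ α_H ^ 2`.
Since `φ` permutes `A(W)` and `α_H ∘ φ` has the same kernel as `α_{φ⁻¹ H}`, it is a multiple
`c_H • α_{φ⁻¹ H}`, so `Disc ∘ φ = Δ • Disc` with `Δ = ∏ c_H ^ 2 ≥ 0`. As `φ` has finite order and
`Disc` does not vanish off the finitely many hyperplanes, `Δ` is a nonnegative root of unity,
i.e. `Δ = 1`.
-/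

set_option synthInstance.maxHeartbeats 1000000

namespace Stmt2

section GeneralField

variable {F : Type*} [Field F] {V : Type*} [AddCommGroup V] [Module F V]

/-- A reflection: an invertible linear endomorphism of finite order whose
fixed-point subspace is a hyperplane. -/
def IsReflection (g : (V →ₗ[F] V)ˣ) : Prop :=
  IsOfFinOrder g ∧
    Module.finrank F (LinearMap.ker ((g : V →ₗ[F] V) - LinearMap.id)) + 1 =
      Module.finrank F V

/-- The set `A(W)` of reflecting hyperplanes of `W`. -/
def reflectingHyperplanes (W : Subgroup (V →ₗ[F] V)ˣ) : Set (Submodule F V) :=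
  {H | ∃ g ∈ W, IsReflection g ∧ LinearMap.ker ((g : V →ₗ[F] V) - LinearMap.id) = H}

/-- `e_H`, the order of the pointwise stabilizer of `H` in `W`. -/
noncomputable def orderH (W : Subgroup (V →ₗ[F] V)ˣ) (H : Submodule F V) : ℕ :=
  Nat.card {g : (V →ₗ[F] V)ˣ // g ∈ W ∧ ∀ x ∈ H, (g : V →ₗ[F] V) x = x}

/-- `W` is generated by the reflections it contains. -/
def GeneratedByReflections (W : Subgroup (V →ₗ[F] V)ˣ) : Prop :=
  W = Subgroup.closure {g : (V →ₗ[F] V)ˣ | g ∈ W ∧ IsReflection g}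

end GeneralField

section Linear

variable {K : Type*} [Field K] {V : Type*} [AddCommGroup V] [Module K V]

theorem _root_.LinearMap.exists_eq_smul_of_ker_le {β γ : V →ₗ[K] K}
    (h : LinearMap.ker β ≤ LinearMap.ker γ) : ∃ c : K, γ = c • β := by
  have hmem := mem_span_of_iInf_ker_le_ker (L := fun _ : Unit => β) (K := γ) (by simpa using h)
  rw [Set.range_const] at hmem
  exact (Submodule.mem_span_singleton.mp hmem).imp fun _ h => h.symm

/-- Here `f ^ k = 1 + k • (f - 1)`, because `(f - 1) ^ 2 = 0`. -/
theorem _root_.Module.End.eq_one_of_isOfFinOrder_of_apply_sub [CharZero K]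
    {f : Module.End K V} (hf : IsOfFinOrder f) (h : ∀ x, f (f x - x) = f x - x) : f = 1 := by
  obtain ⟨n, hn, hfn⟩ := hf.exists_pow_eq_one
  have hpow : ∀ k : ℕ, ∀ x, (f ^ k) x = x + (k : K) • (f x - x) := by
    intro k
    induction k with
    | zero => simp
    | succ k ih =>
      intro x
      rw [pow_succ', Module.End.mul_apply, ih, map_add, map_smul, h]
      push_cast
      module
  ext x
  have hx := hpow n x
  rw [hfn, Module.End.one_apply, left_eq_add, smul_eq_zero, sub_eq_zero] at hx
  exact hx.resolve_left (Nat.cast_ne_zero.mpr hn.ne')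

theorem exists_forall_notMem_of_finite [Infinite K] {S : Set (Submodule K V)} (hS : S.Finite)
    (htop : ⊤ ∉ S) : ∃ x : V, ∀ p ∈ S, x ∉ p := by
  have hcover := Subspace.biUnion_ne_univ_of_top_notMem (s := hS.toFinset) (by simpa using htop)
  obtain ⟨x, hx⟩ := Set.ne_univ_iff_exists_notMem _ |>.mp hcover
  exact ⟨x, fun p hp hxp => hx (Set.mem_biUnion (hS.mem_toFinset.mpr hp) hxp)⟩

end Linear

section OrderedField

variable {K : Type*} [Field K] [LinearOrder K] [IsStrictOrderedRing K]
  {V : Type*} [AddCommGroup V] [Module K V]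

theorem _root_.LinearMap.comp_eq_or_comp_eq_neg {β : V →ₗ[K] K} (hβ : β ≠ 0)
    {f : Module.End K V} (hf : IsOfFinOrder f) (hfix : ∀ x ∈ LinearMap.ker β, f x = x) :
    β ∘ₗ f = β ∨ β ∘ₗ f = -β := by
  obtain ⟨c, hc⟩ := LinearMap.exists_eq_smul_of_ker_le (γ := β ∘ₗ f) fun x hx => by
    rw [LinearMap.mem_ker, LinearMap.comp_apply, hfix x hx]
    exact hx
  obtain ⟨n, hn, hfn⟩ := hf.exists_pow_eq_one
  have hpow : ∀ k : ℕ, β ∘ₗ f ^ k = c ^ k • β := by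
    intro k
    induction k with
    | zero => rw [pow_zero, Module.End.one_eq_id, LinearMap.comp_id, pow_zero, one_smul]
    | succ k ih =>
      rw [pow_succ', Module.End.mul_eq_comp, ← LinearMap.comp_assoc, hc,
        LinearMap.smul_comp, ih, smul_smul, pow_succ']
  have hcn : c ^ n = 1 := by
    have h1 := hpow n
    rw [hfn, Module.End.one_eq_id, LinearMap.comp_id] at h1
    have : (c ^ n - 1) • β = 0 := by linear_combination (norm := module) -h1
    exact sub_eq_zero.mp ((smul_eq_zero.mp this).resolve_right hβ)
  rcases (pow_eq_one_iff_of_ne_zero hn.ne').mp hcn with rfl | ⟨rfl, -⟩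
  · exact .inl (by rw [hc, one_smul])
  · exact .inr (by rw [hc]; module)

theorem _root_.Module.End.eq_one_of_comp_eq {β : V →ₗ[K] K} {f : Module.End K V}
    (hf : IsOfFinOrder f) (hfix : ∀ x ∈ LinearMap.ker β, f x = x) (h : β ∘ₗ f = β) :
    f = 1 :=
  Module.End.eq_one_of_isOfFinOrder_of_apply_sub hf fun x => hfix _ <| by
    rw [LinearMap.mem_ker, map_sub, ← LinearMap.comp_apply, h, sub_self]

theorem eq_one_of_forall_apply_eq_mul {X : Type*} {f : X → K} {g : X → X} {Δ : K}
    (hΔ : 0 ≤ Δ) (hf : ∀ y, f (g y) = Δ * f y) {n : ℕ} (hn : n ≠ 0) {x : X}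
    (hx : g^[n] x = x) (hfx : f x ≠ 0) : Δ = 1 := by
  have hiter : ∀ k : ℕ, ∀ y, f (g^[k] y) = Δ ^ k * f y := by
    intro k
    induction k with
    | zero => simp
    | succ k ih => intro y; rw [Function.iterate_succ_apply', hf, ih, pow_succ', mul_assoc]
  have hn1 : Δ ^ n * f x = 1 * f x := by rw [← hiter, hx, one_mul]
  exact (pow_eq_one_iff_of_nonneg hΔ hn).mp (mul_right_cancel₀ hfx hn1)

end OrderedField

section ReflectionGroup

variable {K : Type*} [Field K] {V : Type*} [AddCommGroup V] [Module K V]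
  {W : Subgroup (V →ₗ[K] V)ˣ}

theorem ne_top_of_mem_reflectingHyperplanes {H : Submodule K V}
    (hH : H ∈ reflectingHyperplanes W) : H ≠ ⊤ := by
  rintro rfl
  obtain ⟨g, -, ⟨-, hrank⟩, hker⟩ := hH
  rw [hker, finrank_top] at hrank
  omega

theorem reflectingHyperplanes_finite [Finite W] : (reflectingHyperplanes W).Finite :=
  (Set.finite_range fun g : W =>
    LinearMap.ker (((g : (V →ₗ[K] V)ˣ) : V →ₗ[K] V) - LinearMap.id)).subset
    fun _ ⟨g, hgW, _, hker⟩ => ⟨⟨g, hgW⟩, hker⟩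

theorem isOfFinOrder_of_mem [Finite W] {g : (V →ₗ[K] V)ˣ} (hg : g ∈ W) :
    IsOfFinOrder (g : Module.End K V) :=
  Units.isOfFinOrder_val.mpr (W.subtype.isOfFinOrder (isOfFinOrder_of_finite (⟨g, hg⟩ : W)))

theorem ker_conj_sub_id (φ g : (V →ₗ[K] V)ˣ) :
    LinearMap.ker (((φ⁻¹ * g * φ : (V →ₗ[K] V)ˣ) : V →ₗ[K] V) - LinearMap.id) =
      (LinearMap.ker ((g : V →ₗ[K] V) - LinearMap.id)).comap (φ : V →ₗ[K] V) := by
  ext x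
  simp only [LinearMap.mem_ker, Submodule.mem_comap, LinearMap.sub_apply, LinearMap.id_apply,
    sub_eq_zero, Units.val_mul, Module.End.mul_apply]
  exact (LinearMap.GeneralLinearGroup.generalLinearEquiv K V φ).symm_apply_eq

theorem comap_mem_reflectingHyperplanes {φ : (V →ₗ[K] V)ˣ}
    (hφW : ∀ g : (V →ₗ[K] V)ˣ, φ * g * φ⁻¹ ∈ W ↔ g ∈ W) {H : Submodule K V}
    (hH : H ∈ reflectingHyperplanes W) :
    H.comap (φ : V →ₗ[K] V) ∈ reflectingHyperplanes W := by
  obtain ⟨g, hgW, ⟨hg, hrank⟩, rfl⟩ := hH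
  set e := LinearMap.GeneralLinearGroup.generalLinearEquiv K V φ
  have hcomap : (LinearMap.ker ((g : V →ₗ[K] V) - LinearMap.id)).comap (φ : V →ₗ[K] V) =
      (LinearMap.ker ((g : V →ₗ[K] V) - LinearMap.id)).map (e.symm : V →ₗ[K] V) :=
    Submodule.comap_equiv_eq_map_symm e _
  refine ⟨φ⁻¹ * g * φ, (hφW _).mp (by simpa [mul_assoc] using hgW),
    ⟨(isConj_iff.mpr ⟨φ⁻¹, by group⟩).isOfFinOrder hg, ?_⟩, ker_conj_sub_id φ g⟩
  rw [ker_conj_sub_id, hcomap, LinearEquiv.finrank_map_eq, hrank]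

theorem bijOn_comap_reflectingHyperplanes [Finite W] {φ : (V →ₗ[K] V)ˣ}
    (hφW : ∀ g : (V →ₗ[K] V)ˣ, φ * g * φ⁻¹ ∈ W ↔ g ∈ W) :
    Set.BijOn (Submodule.comap (φ : V →ₗ[K] V)) (reflectingHyperplanes W)
      (reflectingHyperplanes W) :=
  (reflectingHyperplanes_finite.injOn_iff_bijOn_of_mapsTo
    fun _ hH => comap_mem_reflectingHyperplanes hφW hH).mp
    (Submodule.comap_injective_of_surjective
      (LinearMap.GeneralLinearGroup.generalLinearEquiv K V φ).surjective).injOn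

variable [LinearOrder K] [IsStrictOrderedRing K]

theorem setOf_fixing_ker_eq_pair [Finite W] {β : V →ₗ[K] K} (hβ : β ≠ 0)
    {r : (V →ₗ[K] V)ˣ} (hrW : r ∈ W) (hr1 : r ≠ 1)
    (hfixr : ∀ x ∈ LinearMap.ker β, (r : V →ₗ[K] V) x = x) :
    {g : (V →ₗ[K] V)ˣ | g ∈ W ∧ ∀ x ∈ LinearMap.ker β, (g : V →ₗ[K] V) x = x} = {1, r} := by
  have hsign : ∀ g ∈ W, (∀ x ∈ LinearMap.ker β, (g : V →ₗ[K] V) x = x) →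
      β ∘ₗ (g : V →ₗ[K] V) = β ∨ β ∘ₗ (g : V →ₗ[K] V) = -β :=
    fun g hgW hg => LinearMap.comp_eq_or_comp_eq_neg hβ (isOfFinOrder_of_mem hgW) hg
  have heq_one : ∀ g ∈ W, (∀ x ∈ LinearMap.ker β, (g : V →ₗ[K] V) x = x) →
      β ∘ₗ (g : V →ₗ[K] V) = β → g = 1 :=
    fun g hgW hg h => Units.val_eq_one.mp
      (Module.End.eq_one_of_comp_eq (isOfFinOrder_of_mem hgW) hg h)
  have hr : β ∘ₗ (r : V →ₗ[K] V) = -β :=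
    (hsign r hrW hfixr).resolve_left fun h => hr1 (heq_one r hrW hfixr h)
  have hmul_r : ∀ g ∈ W, (∀ x ∈ LinearMap.ker β, (g : V →ₗ[K] V) x = x) →
      β ∘ₗ (g : V →ₗ[K] V) = -β → g * r = 1 :=
    fun g hgW hg h => heq_one _ (mul_mem hgW hrW)
      (fun x hx => by rw [Units.val_mul, Module.End.mul_apply, hfixr x hx, hg x hx])
      (by rw [Units.val_mul, Module.End.mul_eq_comp, ← LinearMap.comp_assoc, h,
        LinearMap.neg_comp, hr, neg_neg])
  ext g
  constructor
  · rintro ⟨hgW, hg⟩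
    rcases hsign g hgW hg with h | h
    · exact .inl (heq_one g hgW hg h)
    · exact .inr (mul_right_cancel ((hmul_r g hgW hg h).trans (hmul_r r hrW hfixr hr).symm))
  · rintro (rfl | rfl)
    · exact ⟨W.one_mem, fun x _ => rfl⟩
    · exact ⟨hrW, hfixr⟩

theorem orderH_eq_two [Finite W] {H : Submodule K V} (hH : H ∈ reflectingHyperplanes W)
    {β : V →ₗ[K] K} (hβ : LinearMap.ker β = H) : orderH W H = 2 := by
  have hH_ne_top := ne_top_of_mem_reflectingHyperplanes hH
  obtain ⟨r, hrW, -, hrker⟩ := hH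
  subst hβ
  have hβ0 : β ≠ 0 := by
    rintro rfl
    exact hH_ne_top LinearMap.ker_zero
  have hfixr : ∀ x ∈ LinearMap.ker β, (r : V →ₗ[K] V) x = x := fun x hx => by
    rw [← hrker] at hx
    simpa [sub_eq_zero] using hx
  have hr1 : r ≠ 1 := by
    rintro rfl
    apply hH_ne_top
    rw [← hrker, Units.val_one, Module.End.one_eq_id, sub_self, LinearMap.ker_zero]
  rw [orderH, ← Set.coe_ofPred, setOf_fixing_ker_eq_pair hβ0 hrW hr1 hfixr,
    Nat.card_coe_set_eq, Set.ncard_pair hr1.symm]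

theorem exists_nonneg_forall_prod_sq_apply_eq_mul [Finite W] {φ : (V →ₗ[K] V)ˣ}
    (hφW : ∀ g : (V →ₗ[K] V)ˣ, φ * g * φ⁻¹ ∈ W ↔ g ∈ W) {α : Submodule K V → (V →ₗ[K] K)}
    (hα : ∀ H ∈ reflectingHyperplanes W, LinearMap.ker (α H) = H) :
    ∃ Δ : K, 0 ≤ Δ ∧ ∀ y : V,
      ∏ᶠ H ∈ reflectingHyperplanes W, α H ((φ : V →ₗ[K] V) y) ^ 2 =
        Δ * ∏ᶠ H ∈ reflectingHyperplanes W, α H y ^ 2 := by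
  set σ := Submodule.comap (φ : V →ₗ[K] V)
  have hscale : ∀ H ∈ reflectingHyperplanes W,
      ∃ c : K, α H ∘ₗ (φ : V →ₗ[K] V) = c • α (σ H) :=
    fun H hH => LinearMap.exists_eq_smul_of_ker_le <| by
      rw [LinearMap.ker_comp, hα H hH, hα _ (comap_mem_reflectingHyperplanes hφW hH)]
  choose! c hc using hscale
  refine ⟨∏ᶠ H ∈ reflectingHyperplanes W, c H ^ 2,
    finprod_cond_nonneg fun H _ => sq_nonneg (c H), fun y => ?_⟩
  calc ∏ᶠ H ∈ reflectingHyperplanes W, α H ((φ : V →ₗ[K] V) y) ^ 2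
      = ∏ᶠ H ∈ reflectingHyperplanes W, c H ^ 2 * α (σ H) y ^ 2 :=
        finprod_mem_congr rfl fun H hH => by
          rw [← LinearMap.comp_apply, hc H hH, LinearMap.smul_apply, smul_eq_mul, mul_pow]
    _ = (∏ᶠ H ∈ reflectingHyperplanes W, c H ^ 2) *
          ∏ᶠ H ∈ reflectingHyperplanes W, α (σ H) y ^ 2 :=
        finprod_mem_mul_distrib reflectingHyperplanes_finite
    _ = (∏ᶠ H ∈ reflectingHyperplanes W, c H ^ 2) *
          ∏ᶠ H ∈ reflectingHyperplanes W, α H y ^ 2 := by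
        rw [finprod_mem_eq_of_bijOn σ (bijOn_comap_reflectingHyperplanes hφW)
          (g := fun H => α H y ^ 2) fun _ _ => rfl]

end ReflectionGroup

theorem statement2_general (K : Subfield ℝ) {V : Type*} [AddCommGroup V] [Module K V]
    (W : Subgroup (V →ₗ[K] V)ˣ) [Finite W]
    (φ : (V →ₗ[K] V)ˣ) (hφ : IsOfFinOrder φ)
    (hφW : ∀ g : (V →ₗ[K] V)ˣ, φ * g * φ⁻¹ ∈ W ↔ g ∈ W)
    (α : Submodule K V → (V →ₗ[K] K))
    (hα : ∀ H ∈ reflectingHyperplanes W, LinearMap.ker (α H) = H) :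
    ∀ x : V,
      (∏ᶠ H ∈ reflectingHyperplanes W, α H ((φ : V →ₗ[K] V) x) ^ orderH W H) =
        ∏ᶠ H ∈ reflectingHyperplanes W, α H x ^ orderH W H := by
  set Disc := fun y : V => ∏ᶠ H ∈ reflectingHyperplanes W, α H y ^ 2
  have horder : ∀ y, ∏ᶠ H ∈ reflectingHyperplanes W, α H y ^ orderH W H = Disc y := fun y =>
    finprod_mem_congr rfl fun H hH => by rw [orderH_eq_two hH (hα H hH)]
  obtain ⟨Δ, hΔ, hφΔ⟩ := exists_nonneg_forall_prod_sq_apply_eq_mul hφW hα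
  obtain ⟨x₀, hx₀⟩ := exists_forall_notMem_of_finite (reflectingHyperplanes_finite (W := W))
    fun h => ne_top_of_mem_reflectingHyperplanes h rfl
  have hDisc : Disc x₀ ≠ 0 :=
    finprod_mem_induction (· ≠ 0) one_ne_zero (fun _ _ => mul_ne_zero)
      fun H hH => pow_ne_zero 2 fun h => hx₀ H hH (hα H hH ▸ h)
  obtain ⟨n, hn, hφn⟩ := hφ.exists_pow_eq_one
  have hφx₀ : (φ : V →ₗ[K] V)^[n] x₀ = x₀ := by
    rw [← Module.End.pow_apply, ← Units.val_pow_eq_pow_val, hφn, Units.val_one,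
      Module.End.one_apply]
  have hΔ1 : Δ = 1 := eq_one_of_forall_apply_eq_mul hΔ hφΔ hn.ne' hφx₀ hDisc
  intro x
  rw [horder, horder]
  exact (hφΔ x).trans (by rw [hΔ1, one_mul])

/-- For a reflection coset over a subfield `K` of `ℝ`, the automorphism `φ` fixes the
discriminant `Disc = ∏_H α_H ^ e_H` of `W`; equivalently, the root of unity by which `φ`
rescales `Disc` equals `1`. -/
theorem statement2 (K : Subfield ℝ) {V : Type*} [AddCommGroup V] [Module K V]
    [FiniteDimensional K V] (hV : 0 < Module.finrank K V)
    (W : Subgroup (V →ₗ[K] V)ˣ) [Finite W] (hgen : GeneratedByReflections W)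
    (φ : (V →ₗ[K] V)ˣ) (hφ : IsOfFinOrder φ)
    (hφW : ∀ g : (V →ₗ[K] V)ˣ, φ * g * φ⁻¹ ∈ W ↔ g ∈ W)
    (α : Submodule K V → (V →ₗ[K] K))
    (hα : ∀ H ∈ reflectingHyperplanes W, LinearMap.ker (α H) = H) :
    ∀ x : V,
      (∏ᶠ H ∈ reflectingHyperplanes W, α H ((φ : V →ₗ[K] V) x) ^ orderH W H) =
        ∏ᶠ H ∈ reflectingHyperplanes W, α H x ^ orderH W H :=
  statement2_general K W φ hφ hφW α hα

end Stmt2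
end

section
/- Let G be a finite group, N a normal subgroup of G, and g ∈ G such that G is generated by N together with g (so G/N is cyclic, generated by the image of g). Let ψ and ψ' be characters of irreducible complex representations of G whose restrictions to N are irreducible. Then: (1) (1/|N|)·Σ_{n∈N} ψ(ng)·conj(ψ(ng)) = 1; and (2) if the restrictions of ψ and ψ' to N are distinct, then (1/|N|)·Σ_{n∈N} ψ(ng)·conj(ψ'(ng)) = 0. (In other words, the restrictions to the coset Ng of extensions of φ-stable irreducible characters of N have norm 1, and those attached to distinct irreducible characters of N are orthogonal.) -/
/-!
Let `π = Hom(V₂, V₁)` with `G` acting by conjugation and `S = ∑_{n ∈ N} π(ng)`. Since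
characters of finite groups satisfy `χ(x⁻¹) = conj χ(x)`, the trace of `S` is
`∑_{n ∈ N} ψ(ng) conj ψ'(ng)`. Left multiplication by `N` permutes the coset `Ng`, so `S` takes
values in the `N`-invariants of `π`, i.e. in `Hom_N(V₂, V₁)`, and `S` is multiplication by `|N|`
on `G`-invariants. By Schur's lemma for the irreducible restrictions to `N`, `Hom_N(V₂, V₁)` is
zero when their characters differ, and is the line through the `G`-invariant identity map when
`V₁ = V₂`. Hence `trace S` is `0`, resp. `|N|`.
-/

open Module LinearMap
open scoped ComplexOrder

namespace Matrix

theorem trace_conjTranspose_eq_of_conjTranspose_mul_mul_self {R n : Type*} [CommRing R]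
    [StarRing R] [Fintype n] [DecidableEq n] {A B H : Matrix n n R}
    (hH : IsUnit H) (hA : Aᴴ * H * A = H) (hAB : A * B = 1) : Aᴴ.trace = B.trace := by
  have hAH : Aᴴ * H = H * B := by
    calc Aᴴ * H = Aᴴ * H * (A * B) := by rw [hAB, Matrix.mul_one]
      _ = H * B := by rw [← Matrix.mul_assoc, hA]
  rw [← trace_conj hH B, ← hAH, Matrix.mul_assoc,
    mul_nonsing_inv _ ((isUnit_iff_isUnit_det H).1 hH), Matrix.mul_one]

variable {𝕜 n G : Type*} [RCLike 𝕜] [Fintype n] [DecidableEq n] [Fintype G]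

theorem posDef_sum_conjTranspose_mul_self [Monoid G] (M : G →* Matrix n n 𝕜) :
    (∑ y, (M y)ᴴ * M y).PosDef := by
  classical
  rw [← Finset.add_sum_erase _ _ (Finset.mem_univ 1), map_one, conjTranspose_one, one_mul]
  exact PosDef.one.add_posSemidef
    (posSemidef_sum _ fun y _ => posSemidef_conjTranspose_mul_self (M y))

theorem conjTranspose_mul_sum_conjTranspose_mul_self_mul [Group G] (M : G →* Matrix n n 𝕜)
    (x : G) : (M x)ᴴ * (∑ y, (M y)ᴴ * M y) * M x = ∑ y, (M y)ᴴ * M y := by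
  rw [Finset.mul_sum, Finset.sum_mul]
  refine Fintype.sum_bijective (· * x) (Group.mulRight_bijective x) _ _ fun y => ?_
  simp only [map_mul, conjTranspose_mul, Matrix.mul_assoc]

end Matrix

namespace Representation

section

variable {k G V : Type*} [Field k] [Group G] [AddCommGroup V] [Module k V]

theorem IsIrreducible.of_forall_submodule [Nontrivial V] {ρ : Representation k G V}
    (h : ∀ p : Submodule k V, (∀ x, ∀ v ∈ p, ρ x v ∈ p) → p = ⊥ ∨ p = ⊤) :
    IsIrreducible ρ where
  exists_pair_ne := ⟨⊥, ⊤, fun hbt => bot_ne_top (congrArg Subrepresentation.toSubmodule hbt)⟩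
  eq_bot_or_eq_top σ := (h σ.toSubmodule σ.apply_mem_toSubmodule).imp
    (fun hσ => Subrepresentation.toSubmodule_injective hσ)
    (fun hσ => Subrepresentation.toSubmodule_injective hσ)

variable (ρ : Representation k G V) (N : Subgroup G) [Fintype N] (g : G)

theorem sum_coset_apply_mem_invariants (v : V) :
    (∑ n : N, ρ (n * g)) v ∈ invariants (ρ.comp N.subtype) := fun m => by
  change ρ m ((∑ n : N, ρ (n * g)) v) = _
  rw [LinearMap.sum_apply, map_sum]
  exact Fintype.sum_bijective (m * ·) (Group.mulLeft_bijective m) _ _ fun n => by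
    rw [← Module.End.mul_apply, ← map_mul, Subgroup.coe_mul, mul_assoc]

theorem sum_char_coset_eq_card_mul_finrank [FiniteDimensional k V]
    (hinv : invariants (ρ.comp N.subtype) ≤ ρ.invariants) :
    ∑ n : N, ρ.character (n * g) = Nat.card N * finrank k (invariants (ρ.comp N.subtype)) := by
  set I := invariants (ρ.comp N.subtype)
  set S := ∑ n : N, ρ (n * g)
  have hS : S.restrict (fun v _ => sum_coset_apply_mem_invariants ρ N g v) =
      (Nat.card N : k) • LinearMap.id := by
    ext ⟨v, hv⟩
    simp [S, hinv hv _, Nat.card_eq_fintype_card, Nat.cast_smul_eq_nsmul]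
  calc ∑ n : N, ρ.character (n * g) = trace k V S := by simp [S, character, map_sum]
    _ = trace k I (S.restrict _) :=
      (trace_restrict_eq_of_forall_mem I S (sum_coset_apply_mem_invariants ρ N g)).symm
    _ = _ := by rw [hS, map_smul, trace_id, smul_eq_mul]

end

section

variable {𝕜 G V W : Type*} [RCLike 𝕜] [Group G] [Finite G] [AddCommGroup V] [Module 𝕜 V]
  [FiniteDimensional 𝕜 V] [AddCommGroup W] [Module 𝕜 W] [FiniteDimensional 𝕜 W]

/-- Averaging the standard inner product over `G` makes every `ρ x` unitary, so the
trace of `ρ x⁻¹ = (ρ x)⁻¹` is that of the adjoint of `ρ x`. -/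
theorem char_inv (ρ : Representation 𝕜 G V) (x : G) :
    ρ.character x⁻¹ = star (ρ.character x) := by
  have := Fintype.ofFinite G
  let b := Module.finBasis 𝕜 V
  let M : G →* Matrix _ _ 𝕜 := (toMatrixAlgEquiv b).toMonoidHom.comp ρ
  have hM (y : G) : ρ.character y = (M y).trace := trace_eq_matrix_trace 𝕜 b (ρ y)
  rw [hM, hM, ← Matrix.trace_conjTranspose]
  refine (Matrix.trace_conjTranspose_eq_of_conjTranspose_mul_mul_self
    (Matrix.posDef_sum_conjTranspose_mul_self M).isUnit
    (Matrix.conjTranspose_mul_sum_conjTranspose_mul_self_mul M x) ?_).symm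
  rw [← map_mul, mul_inv_cancel, map_one]

variable (N : Subgroup G) [Fintype N] (g : G)

theorem sum_char_coset_mul_star_eq_zero (ρ : Representation 𝕜 G V) (σ : Representation 𝕜 G W)
    [IsIrreducible (ρ.comp N.subtype)] [IsIrreducible (σ.comp N.subtype)]
    (hne : ∃ n ∈ N, ρ.character n ≠ σ.character n) :
    ∑ n : N, ρ.character (n * g) * star (σ.character (n * g)) = 0 := by
  have : IsEmpty (Equiv (σ.comp N.subtype) (ρ.comp N.subtype)) := ⟨fun e => by
    obtain ⟨n, hn, hρσ⟩ := hne
    exact hρσ (congrFun (char_iso e) ⟨n, hn⟩).symm⟩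
  have hI : invariants ((linHom σ ρ).comp N.subtype) = ⊥ := by
    have : Subsingleton (invariants (linHom (σ.comp N.subtype) (ρ.comp N.subtype))) :=
      (invariantsEquivIntertwiningMap _ _).toEquiv.subsingleton
    exact Submodule.eq_bot_of_subsingleton
      (p := invariants (linHom (σ.comp N.subtype) (ρ.comp N.subtype)))
  calc ∑ n : N, ρ.character (n * g) * star (σ.character (n * g))
      = ∑ n : N, (linHom σ ρ).character (n * g) := by
        simp only [char_linHom, char_inv, mul_comm]
    _ = 0 := by
        rw [sum_char_coset_eq_card_mul_finrank _ _ _ (hI ▸ bot_le), hI, finrank_bot,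
          Nat.cast_zero, mul_zero]

end

variable {G V : Type*} [Group G] [Finite G] [AddCommGroup V] [Module ℂ V]
  [FiniteDimensional ℂ V] [Nontrivial V]

theorem inv_card_mul_sum_char_coset_mul_star_self_eq_one (ρ : Representation ℂ G V)
    (N : Subgroup G) [Fintype N] (g : G) [IsIrreducible (ρ.comp N.subtype)] :
    (Nat.card N : ℂ)⁻¹ * ∑ n : N, ρ.character (n * g) * star (ρ.character (n * g)) = 1 := by
  set I := invariants ((linHom ρ ρ).comp N.subtype)
  have hrank : finrank ℂ I = 1 :=
    (invariantsEquivIntertwiningMap (ρ.comp N.subtype) (ρ.comp N.subtype)).finrank_eq.trans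
      (IsIrreducible.finrank_intertwiningMap_self _)
  have hid : (1 : Module.End ℂ V) ∈ (linHom ρ ρ).invariants := fun x => by
    ext v
    simp [linHom_apply]
  have hI : (linHom ρ ρ).invariants = I := by
    refine Submodule.eq_of_le_of_finrank_le (fun f hf n => hf n) ?_
    rw [hrank, Nat.one_le_iff_ne_zero, Ne, Submodule.finrank_eq_zero]
    exact fun h => one_ne_zero ((Submodule.mem_bot ℂ).1 (h ▸ hid))
  have hcard : (Nat.card N : ℂ) ≠ 0 := Nat.cast_ne_zero.2 Nat.card_pos.ne'
  calc (Nat.card N : ℂ)⁻¹ * ∑ n : N, ρ.character (n * g) * star (ρ.character (n * g))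
      = (Nat.card N : ℂ)⁻¹ * ∑ n : N, (linHom ρ ρ).character (n * g) := by
        simp only [char_linHom, char_inv, mul_comm]
    _ = 1 := by
        rw [sum_char_coset_eq_card_mul_finrank _ _ _ hI.ge, hrank, Nat.cast_one, mul_one,
          inv_mul_cancel₀ hcard]

end Representation

theorem statement3_general {G : Type*} [Group G] [Finite G]
    (N : Subgroup G) (g : G)
    {V₁ : Type*} [AddCommGroup V₁] [Module ℂ V₁] [FiniteDimensional ℂ V₁] [Nontrivial V₁]
    {V₂ : Type*} [AddCommGroup V₂] [Module ℂ V₂] [FiniteDimensional ℂ V₂] [Nontrivial V₂]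
    (ρ₁ : Representation ℂ G V₁) (ρ₂ : Representation ℂ G V₂)
    (hirrN₁ : ∀ p : Submodule ℂ V₁, (∀ x ∈ N, ∀ v ∈ p, ρ₁ x v ∈ p) → p = ⊥ ∨ p = ⊤)
    (hirrN₂ : ∀ p : Submodule ℂ V₂, (∀ x ∈ N, ∀ v ∈ p, ρ₂ x v ∈ p) → p = ⊥ ∨ p = ⊤)
    (ψ ψ' : G → ℂ)
    (hψ : ψ = fun x => LinearMap.trace ℂ V₁ (ρ₁ x))
    (hψ' : ψ' = fun x => LinearMap.trace ℂ V₂ (ρ₂ x)) :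
    (Nat.card N : ℂ)⁻¹ * (∑ᶠ n ∈ N, ψ (n * g) * (starRingEnd ℂ) (ψ (n * g))) = 1 ∧
      ((∃ n ∈ N, ψ n ≠ ψ' n) →
        (Nat.card N : ℂ)⁻¹ * (∑ᶠ n ∈ N, ψ (n * g) * (starRingEnd ℂ) (ψ' (n * g))) = 0) := by
  classical
  have := Fintype.ofFinite G
  obtain rfl : ψ = ρ₁.character := hψ
  obtain rfl : ψ' = ρ₂.character := hψ'
  have hsum (f : G → ℂ) : ∑ᶠ n ∈ N, f n = ∑ n : N, f n :=
    (finsum_set_coe_eq_finsum_mem (N : Set G)).symm.trans (finsum_eq_sum_of_fintype _)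
  have : Representation.IsIrreducible (ρ₁.comp N.subtype) :=
    Representation.IsIrreducible.of_forall_submodule fun p hp => hirrN₁ p fun x hx => hp ⟨x, hx⟩
  have : Representation.IsIrreducible (ρ₂.comp N.subtype) :=
    Representation.IsIrreducible.of_forall_submodule fun p hp => hirrN₂ p fun x hx => hp ⟨x, hx⟩
  simp only [hsum, starRingEnd_apply]
  refine ⟨?_, fun hne => ?_⟩
  · exact Representation.inv_card_mul_sum_char_coset_mul_star_self_eq_one ρ₁ N g
  · rw [Representation.sum_char_coset_mul_star_eq_zero N g ρ₁ ρ₂ hne, mul_zero]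

/-- Let `G` be a finite group, `N ⊴ G`, and `g ∈ G` with `G = ⟨N, g⟩`. If `ψ`, `ψ'` are
characters of irreducible complex representations of `G` whose restrictions to `N` are
irreducible, then the restriction of `ψ` to the coset `Ng` has norm `1`, and if the
restrictions of `ψ` and `ψ'` to `N` are distinct then the corresponding restrictions to
`Ng` are orthogonal. -/
theorem statement3 {G : Type*} [Group G] [Finite G]
    (N : Subgroup G) [N.Normal] (g : G)
    (hgen : Subgroup.closure ((N : Set G) ∪ {g}) = ⊤)
    {V₁ : Type*} [AddCommGroup V₁] [Module ℂ V₁] [FiniteDimensional ℂ V₁] [Nontrivial V₁]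
    {V₂ : Type*} [AddCommGroup V₂] [Module ℂ V₂] [FiniteDimensional ℂ V₂] [Nontrivial V₂]
    (ρ₁ : Representation ℂ G V₁) (ρ₂ : Representation ℂ G V₂)
    (hirr₁ : ∀ p : Submodule ℂ V₁, (∀ x : G, ∀ v ∈ p, ρ₁ x v ∈ p) → p = ⊥ ∨ p = ⊤)
    (hirr₂ : ∀ p : Submodule ℂ V₂, (∀ x : G, ∀ v ∈ p, ρ₂ x v ∈ p) → p = ⊥ ∨ p = ⊤)
    (hirrN₁ : ∀ p : Submodule ℂ V₁, (∀ x ∈ N, ∀ v ∈ p, ρ₁ x v ∈ p) → p = ⊥ ∨ p = ⊤)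
    (hirrN₂ : ∀ p : Submodule ℂ V₂, (∀ x ∈ N, ∀ v ∈ p, ρ₂ x v ∈ p) → p = ⊥ ∨ p = ⊤)
    (ψ ψ' : G → ℂ)
    (hψ : ψ = fun x => LinearMap.trace ℂ V₁ (ρ₁ x))
    (hψ' : ψ' = fun x => LinearMap.trace ℂ V₂ (ρ₂ x)) :
    (Nat.card N : ℂ)⁻¹ * (∑ᶠ n ∈ N, ψ (n * g) * (starRingEnd ℂ) (ψ (n * g))) = 1 ∧
      ((∃ n ∈ N, ψ n ≠ ψ' n) →
        (Nat.card N : ℂ)⁻¹ * (∑ᶠ n ∈ N, ψ (n * g) * (starRingEnd ℂ) (ψ' (n * g))) = 0) :=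
  statement3_general N g ρ₁ ρ₂ hirrN₁ hirrN₂ ψ ψ' hψ hψ'
end

section
/- For every class function α on the coset Wφ, S(α·det_V^*)(x) = (−1)^r · x^{−r} · (S(α^*)(1/x))^σ as rational functions, where α·det_V^* denotes the class function uφ ↦ α(uφ)·conj(det(uφ)), S(α^*)(1/x) denotes the rational function S(α^*) with 1/x substituted for x, and σ is coefficientwise complex conjugation. -/
/-!
The identity holds summand by summand. For `g = uφ` (of finite order, since `φ` has finite order
and normalizes the finite group `W`) every eigenvalue `μ` of `g` is a root of unity, so
`conj μ = μ⁻¹` and `1 - conj μ · x = -conj μ · (x - μ)`. Multiplying over the eigenvalues gives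
`det(1 - x·g)^σ = (-1)^r · conj(det g) · charpoly_g(x)`, and `charpoly_g(x) = x^r · det(1 - x⁻¹·g)`
is the reversal of `det(1 - x·g)`.
-/

set_option synthInstance.maxHeartbeats 1000000

namespace Stmt4

variable {V : Type*} [AddCommGroup V] [Module ℂ V]

/-- A reflection: an invertible linear endomorphism of finite order whose
fixed-point subspace is a hyperplane. -/
def IsReflection (g : (V →ₗ[ℂ] V)ˣ) : Prop :=
  IsOfFinOrder g ∧
    Module.finrank ℂ (LinearMap.ker ((g : V →ₗ[ℂ] V) - LinearMap.id)) + 1 =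
      Module.finrank ℂ V

/-- `W` is generated by the reflections it contains. -/
def GeneratedByReflections (W : Subgroup (V →ₗ[ℂ] V)ˣ) : Prop :=
  W = Subgroup.closure {g : (V →ₗ[ℂ] V)ˣ | g ∈ W ∧ IsReflection g}

/-- The polynomial `det (1 - x • g)`. -/
noncomputable def detOneSub [FiniteDimensional ℂ V] (g : V →ₗ[ℂ] V) : Polynomial ℂ :=
  Matrix.det (1 - (Polynomial.X : Polynomial ℂ) •
    ((LinearMap.toMatrix (Module.finBasis ℂ V) (Module.finBasis ℂ V) g).map
      fun a => Polynomial.C a))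

/-- The rational function `S(α)(x) = (1/|H|) ∑_{u ∈ H} α(u b)/(det(1 - x·u b))^σ`
attached to a class function `α` on the coset `H·b`. -/
noncomputable def Scoset [FiniteDimensional ℂ V] (H : Subgroup (V →ₗ[ℂ] V)ˣ)
    (b : (V →ₗ[ℂ] V)ˣ) (α : (V →ₗ[ℂ] V)ˣ → ℂ) : RatFunc ℂ :=
  (Nat.card H : RatFunc ℂ)⁻¹ *
    ∑ᶠ u ∈ H, RatFunc.C (α (u * b)) /
      algebraMap (Polynomial ℂ) (RatFunc ℂ)
        ((detOneSub ((u * b : (V →ₗ[ℂ] V)ˣ) : V →ₗ[ℂ] V)).map (starRingEnd ℂ))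

/-- Coefficientwise complex conjugation `f ↦ f^σ` on rational functions. -/
noncomputable def ratConjCoeff (f : RatFunc ℂ) : RatFunc ℂ :=
  RatFunc.eval ((RatFunc.C : ℂ →+* RatFunc ℂ).comp (starRingEnd ℂ)) RatFunc.X f

/-- The substitution `x ↦ 1/x` on rational functions. -/
noncomputable def ratSubInv (f : RatFunc ℂ) : RatFunc ℂ :=
  RatFunc.eval (RatFunc.C : ℂ →+* RatFunc ℂ) (RatFunc.X : RatFunc ℂ)⁻¹ f

end Stmt4

open Polynomial
open scoped nonZeroDivisors

theorem IsOfFinOrder.mul_of_normalizes {G : Type*} [Group G] {W : Subgroup G} [Finite W]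
    {u φ : G} (hu : u ∈ W) (hφ : IsOfFinOrder φ) (hφW : ∀ g ∈ W, φ * g * φ⁻¹ ∈ W) :
    IsOfFinOrder (u * φ) := by
  obtain ⟨n, hn, hφn⟩ := isOfFinOrder_iff_pow_eq_one.mp hφ
  have hmem : ∀ k : ℕ, (u * φ) ^ k * φ⁻¹ ^ k ∈ W := by
    intro k
    induction k with
    | zero => simp
    | succ k ih =>
      -- `(uφ)^(k+1) φ⁻¹^(k+1) = u · φ ((uφ)^k φ⁻¹^k) φ⁻¹`
      have h := W.mul_mem hu (hφW _ ih)
      convert h using 1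
      group
  have hW : (u * φ) ^ n ∈ W := by simpa [inv_pow, hφn] using hmem n
  exact (Submonoid.isOfFinOrder_coe.2 (isOfFinOrder_of_finite (⟨_, hW⟩ : W))).of_pow hn.ne'

theorem Polynomial.reverse_X_sub_C {R : Type*} [CommRing R] (μ : R) :
    (X - C μ).reverse = 1 - C μ * X := by
  nontriviality R
  have hX : (X : R[X]).reverse = 1 := by
    rw [← one_mul X, reverse_mul_X, ← C_1, reverse_C]
  rw [sub_eq_add_neg, ← C_neg, reverse_add_C, hX, natDegree_X, pow_one, C_neg, neg_mul,
    ← sub_eq_add_neg]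

theorem Polynomial.reverse_multiset_prod_X_sub_C {R : Type*} [CommRing R] [NoZeroDivisors R]
    (s : Multiset R) :
    (s.map fun μ => X - C μ).prod.reverse = (s.map fun μ => 1 - C μ * X).prod := by
  induction s using Multiset.induction_on with
  | empty => simp only [Multiset.map_zero, Multiset.prod_zero, ← C_1, reverse_C]
  | cons a s ih => simp [reverse_mul_of_domain, reverse_X_sub_C, ih]

theorem Matrix.pow_eq_one_of_isRoot_charpoly {n K : Type*} [Fintype n] [DecidableEq n] [Field K]
    {M : Matrix n n K} {N : ℕ} (hM : M ^ N = 1) {μ : K} (hμ : M.charpoly.IsRoot μ) : μ ^ N = 1 := by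
  have h := spectrum.pow_image_subset M N ⟨μ, mem_spectrum_iff_isRoot_charpoly.2 hμ, rfl⟩
  rw [hM] at h
  by_contra hne
  refine spectrum.mem_iff.1 h ?_
  rw [← map_one (algebraMap K _), ← map_sub]
  exact (isUnit_iff_ne_zero.2 (sub_ne_zero.2 hne)).map _

theorem Matrix.charpolyRev_map_conj_of_pow_eq_one {n : Type*} [Fintype n] [DecidableEq n]
    {M : Matrix n n ℂ} {N : ℕ} (hN : N ≠ 0) (hM : M ^ N = 1) :
    M.charpolyRev.map (starRingEnd ℂ) =
      C ((-1) ^ Fintype.card n * starRingEnd ℂ M.det) * M.charpoly := by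
  have hsplit : M.charpoly.Splits := IsAlgClosed.splits _
  set s := M.charpoly.roots
  have hcard : Multiset.card s = Fintype.card n := by
    rw [splits_iff_card_roots.mp hsplit, charpoly_natDegree_eq_dim]
  have hcharpoly : M.charpoly = (s.map fun μ => X - C μ).prod :=
    hsplit.eq_prod_roots_of_monic M.charpoly_monic
  have hunit : ∀ μ ∈ s, starRingEnd ℂ μ * μ = 1 := fun μ hμ => by
    have hμN := M.pow_eq_one_of_isRoot_charpoly hM (isRoot_of_mem_roots hμ)
    rw [Complex.conj_mul', Complex.norm_eq_one_of_pow_eq_one hμN hN]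
    simp
  rw [← reverse_charpoly, hcharpoly, reverse_multiset_prod_X_sub_C]
  calc _ = (s.map fun μ => C (-starRingEnd ℂ μ) * (X - C μ)).prod := by
        rw [Polynomial.map_multiset_prod, Multiset.map_map]
        refine congrArg _ (Multiset.map_congr rfl fun μ hμ => ?_)
        have h := congrArg C (hunit μ hμ)
        rw [C_mul, C_1] at h
        simp only [Function.comp_apply, Polynomial.map_sub, Polynomial.map_one, Polynomial.map_mul,
          map_C, map_X, C_neg]
        linear_combination -h
    _ = C (s.map fun μ => -starRingEnd ℂ μ).prod * (s.map fun μ => X - C μ).prod := by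
        rw [map_multiset_prod, Multiset.map_map, ← Multiset.prod_map_mul]
        rfl
    _ = _ := by
        have hneg : (s.map fun μ => -starRingEnd ℂ μ) = (s.map (starRingEnd ℂ)).map Neg.neg := by
          rw [Multiset.map_map]
          rfl
        rw [hneg, Multiset.prod_map_neg, Multiset.card_map, hcard, ← map_multiset_prod,
          det_eq_prod_roots_charpoly]

namespace RatFunc

universe u

variable {K L : Type u} [Field K] [Field L]

/-- `RatFunc.eval f a` is a ring homomorphism as soon as no nonzero polynomial vanishes under
`eval₂ f a`, since then no denominator is sent to `0`. -/
noncomputable def evalRingHom (f : K →+* L) (a : L) (hf : Function.Injective (eval₂RingHom f a)) :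
    RatFunc K →+* L :=
  liftRingHom (eval₂RingHom f a) (nonZeroDivisors_le_comap_nonZeroDivisors_of_injective _ hf)

@[simp]
theorem coe_evalRingHom (f : K →+* L) (a : L) (hf : Function.Injective (eval₂RingHom f a)) :
    ⇑(evalRingHom f a hf) = RatFunc.eval f a :=
  funext fun p => by rw [evalRingHom, liftRingHom_apply]; rfl

theorem evalRingHom_comp_C (f : K →+* L) (a : L) (hf : Function.Injective (eval₂RingHom f a)) :
    (evalRingHom f a hf).comp C = f :=
  RingHom.ext fun z => by simp

theorem transcendental_X_inv : Transcendental K (X⁻¹ : RatFunc K) :=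
  fun h => transcendental_X (by simpa using h.inv)

theorem aeval_X_eq_algebraMap (p : K[X]) :
    aeval (X : RatFunc K) p = algebraMap K[X] (RatFunc K) p := by
  rw [← algebraMap_X, aeval_algebraMap_apply, aeval_X_left_apply]

theorem aeval_X_inv_ne_zero {p : K[X]} (hp : p ≠ 0) : aeval (X⁻¹ : RatFunc K) p ≠ 0 :=
  (map_ne_zero_iff _ (transcendental_iff_injective.1 transcendental_X_inv)).2 hp

theorem injective_eval₂RingHom_C_X_inv :
    Function.Injective (eval₂RingHom (C : K →+* RatFunc K) X⁻¹) := by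
  rw [← algebraMap_eq_C]
  exact transcendental_iff_injective.1 transcendental_X_inv

theorem injective_eval₂RingHom_C_comp_X {f : K →+* K} (hf : Function.Injective f) :
    Function.Injective (eval₂RingHom (C.comp f) (X : RatFunc K)) := by
  have hmap (p : K[X]) :
      eval₂RingHom (C.comp f) X p = algebraMap K[X] (RatFunc K) (p.map f) := by
    rw [coe_eval₂RingHom, ← eval₂_map, ← aeval_X_eq_algebraMap, aeval_def, algebraMap_eq_C]
  intro p q h
  rw [hmap, hmap] at h
  exact Polynomial.map_injective f hf (algebraMap_injective K h)

theorem algebraMap_reflect {N : ℕ} {p : K[X]} (hp : p.natDegree ≤ N) :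
    algebraMap K[X] (RatFunc K) (p.reflect N) = X ^ N * aeval (X⁻¹ : RatFunc K) p := by
  let : Invertible (X⁻¹ : RatFunc K) := invertibleOfNonzero (inv_ne_zero X_ne_zero)
  have := eval₂_reflect_mul_pow (algebraMap K (RatFunc K)) (X⁻¹ : RatFunc K) N p hp
  rw [invOf_eq_inv, inv_inv] at this
  rw [aeval_def, ← this, ← aeval_def, aeval_X_eq_algebraMap, inv_pow, mul_comm,
    inv_mul_cancel_right₀ (pow_ne_zero _ X_ne_zero)]

end RatFunc

namespace Stmt4

variable {V : Type*} [AddCommGroup V] [Module ℂ V]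

noncomputable def ratConjSubInvHom : RatFunc ℂ →+* RatFunc ℂ :=
  (RatFunc.evalRingHom ((RatFunc.C : ℂ →+* RatFunc ℂ).comp (starRingEnd ℂ)) RatFunc.X
      (RatFunc.injective_eval₂RingHom_C_comp_X (RingHom.injective _))).comp
    (RatFunc.evalRingHom RatFunc.C RatFunc.X⁻¹ RatFunc.injective_eval₂RingHom_C_X_inv)

theorem ratConjSubInvHom_apply (f : RatFunc ℂ) :
    ratConjSubInvHom f = ratConjCoeff (ratSubInv f) := by
  simp [ratConjSubInvHom, ratConjCoeff, ratSubInv]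

theorem ratConjSubInvHom_C (z : ℂ) :
    ratConjSubInvHom (RatFunc.C z) = RatFunc.C (starRingEnd ℂ z) := by
  simp [ratConjSubInvHom]

theorem ratConjSubInvHom_algebraMap (p : ℂ[X]) :
    ratConjSubInvHom (algebraMap ℂ[X] (RatFunc ℂ) p) =
      aeval (RatFunc.X⁻¹ : RatFunc ℂ) (p.map (starRingEnd ℂ)) := by
  rw [ratConjSubInvHom, RingHom.comp_apply, RatFunc.coe_evalRingHom _ RatFunc.X⁻¹,
    RatFunc.eval_algebraMap, Algebra.algebraMap_self, RingHom.id_apply, hom_eval₂,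
    RatFunc.evalRingHom_comp_C, map_inv₀, RatFunc.coe_evalRingHom, RatFunc.eval_X, ← eval₂_map,
    aeval_def, RatFunc.algebraMap_eq_C]

theorem detOneSub_ne_zero [FiniteDimensional ℂ V] (g : Module.End ℂ V) : detOneSub g ≠ 0 := by
  have h1 : (detOneSub g).eval 0 = 1 := Matrix.eval_charpolyRev
  intro h
  simp [h] at h1

theorem detOneSub_map_conj [FiniteDimensional ℂ V] {g : Module.End ℂ V} (hg : IsOfFinOrder g) :
    (detOneSub g).map (starRingEnd ℂ) =
      C ((-1) ^ Module.finrank ℂ V * starRingEnd ℂ (LinearMap.det g)) * g.charpoly := by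
  obtain ⟨N, hN, hgN⟩ := isOfFinOrder_iff_pow_eq_one.mp hg
  have hM : (LinearMap.toMatrix (Module.finBasis ℂ V) (Module.finBasis ℂ V) g) ^ N = 1 := by
    rw [LinearMap.toMatrix_pow, hgN, Module.End.one_eq_id, LinearMap.toMatrix_id]
  have h := Matrix.charpolyRev_map_conj_of_pow_eq_one hN.ne' hM
  rwa [LinearMap.det_toMatrix, LinearMap.charpoly_toMatrix, Fintype.card_fin] at h

theorem algebraMap_charpoly [FiniteDimensional ℂ V] (g : Module.End ℂ V) :
    algebraMap ℂ[X] (RatFunc ℂ) g.charpoly =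
      RatFunc.X ^ Module.finrank ℂ V * aeval (RatFunc.X⁻¹ : RatFunc ℂ) (detOneSub g) := by
  set M := LinearMap.toMatrix (Module.finBasis ℂ V) (Module.finBasis ℂ V) g
  have hdeg : M.charpoly.natDegree = Module.finrank ℂ V := by
    rw [M.charpoly_natDegree_eq_dim, Fintype.card_fin]
  have hrev : detOneSub g = M.charpoly.reverse := M.reverse_charpoly.symm
  have hle : (detOneSub g).natDegree ≤ Module.finrank ℂ V :=
    hrev ▸ (reverse_natDegree_le _).trans hdeg.le
  rw [← RatFunc.algebraMap_reflect hle, hrev, reverse, hdeg, reflect_reflect,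
    LinearMap.charpoly_toMatrix]

theorem C_mul_conj_det_div_detOneSub [FiniteDimensional ℂ V] {g : Module.End ℂ V}
    (hg : IsOfFinOrder g) (z : ℂ) :
    RatFunc.C (z * starRingEnd ℂ (LinearMap.det g)) /
        algebraMap ℂ[X] (RatFunc ℂ) ((detOneSub g).map (starRingEnd ℂ)) =
      (-1) ^ Module.finrank ℂ V * (RatFunc.X⁻¹) ^ Module.finrank ℂ V *
        ratConjSubInvHom (RatFunc.C (starRingEnd ℂ z) /
          algebraMap ℂ[X] (RatFunc ℂ) ((detOneSub g).map (starRingEnd ℂ))) := by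
  have hdet : RatFunc.C (starRingEnd ℂ (LinearMap.det g)) ≠ 0 := by
    simpa using (LinearMap.isUnit_det g hg.isUnit).ne_zero
  have hrev : aeval (RatFunc.X⁻¹ : RatFunc ℂ) (detOneSub g) ≠ 0 :=
    RatFunc.aeval_X_inv_ne_zero (detOneSub_ne_zero g)
  have hconj : (starRingEnd ℂ).comp (starRingEnd ℂ) = RingHom.id ℂ :=
    RingHom.ext starRingEnd_self_apply
  rw [map_div₀, ratConjSubInvHom_C, ratConjSubInvHom_algebraMap, Polynomial.map_map, hconj,
    Polynomial.map_id, starRingEnd_self_apply, detOneSub_map_conj hg,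
    map_mul (algebraMap ℂ[X] (RatFunc ℂ)), RatFunc.algebraMap_C, algebraMap_charpoly,
    map_mul RatFunc.C, map_mul RatFunc.C, map_pow, map_neg, map_one]
  field_simp
  rw [← pow_mul, (even_two.mul_left _).neg_one_pow, mul_one]
  ring

theorem statement4_general [FiniteDimensional ℂ V]
    (W : Subgroup (V →ₗ[ℂ] V)ˣ) [Finite W]
    (φ : (V →ₗ[ℂ] V)ˣ) (hφ : IsOfFinOrder φ)
    (hφW : ∀ g : (V →ₗ[ℂ] V)ˣ, φ * g * φ⁻¹ ∈ W ↔ g ∈ W)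
    (α : (V →ₗ[ℂ] V)ˣ → ℂ) :
    Scoset W φ (fun x => α x * (starRingEnd ℂ) (LinearMap.det (x : V →ₗ[ℂ] V))) =
      (-1 : RatFunc ℂ) ^ Module.finrank ℂ V *
        ((RatFunc.X : RatFunc ℂ)⁻¹) ^ Module.finrank ℂ V *
        ratConjCoeff (ratSubInv (Scoset W φ fun x => (starRingEnd ℂ) (α x))) := by
  have hpush (c : RatFunc ℂ) (F : (V →ₗ[ℂ] V)ˣ → RatFunc ℂ) :
      c * ratConjSubInvHom (∑ᶠ u ∈ W, F u) = ∑ᶠ u ∈ W, c * ratConjSubInvHom (F u) :=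
    (congrArg (c * ·) (AddMonoidHom.map_finsum_mem F (ratConjSubInvHom : RatFunc ℂ →+ RatFunc ℂ)
      (Set.toFinite _))).trans (mul_finsum_mem _ _)
  rw [← ratConjSubInvHom_apply, Scoset, Scoset, map_mul, map_inv₀, map_natCast,
    mul_left_comm _ (Nat.card W : RatFunc ℂ)⁻¹, hpush]
  congr 1
  refine finsum_mem_congr rfl fun u hu => ?_
  have huφ : IsOfFinOrder (u * φ) := hφ.mul_of_normalizes hu fun g hg => (hφW g).2 hg
  exact C_mul_conj_det_div_detOneSub (Units.isOfFinOrder_val.2 huφ) _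

/-- For every class function `α` on the coset `Wφ`,
`S(α·det_V^*)(x) = (-1)^r · x^{-r} · (S(α^*)(1/x))^σ`. -/
theorem statement4 [FiniteDimensional ℂ V] (hV : 0 < Module.finrank ℂ V)
    (W : Subgroup (V →ₗ[ℂ] V)ˣ) [Finite W] (hgen : GeneratedByReflections W)
    (φ : (V →ₗ[ℂ] V)ˣ) (hφ : IsOfFinOrder φ)
    (hφW : ∀ g : (V →ₗ[ℂ] V)ˣ, φ * g * φ⁻¹ ∈ W ↔ g ∈ W)
    (α : (V →ₗ[ℂ] V)ˣ → ℂ)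
    (hα : ∀ u ∈ W, ∀ v ∈ W, α (v * (u * φ) * v⁻¹) = α (u * φ)) :
    Scoset W φ (fun x => α x * (starRingEnd ℂ) (LinearMap.det (x : V →ₗ[ℂ] V))) =
      (-1 : RatFunc ℂ) ^ Module.finrank ℂ V *
        ((RatFunc.X : RatFunc ℂ)⁻¹) ^ Module.finrank ℂ V *
        ratConjCoeff (ratSubInv (Scoset W φ fun x => (starRingEnd ℂ) (α x))) :=
  statement4_general W φ hφ hφW α

end Stmt4
end

section
/- Fix an integer e ≥ 1 and let ζ := exp(2πi/e) ∈ ℂ. For 0 ≤ k < i ≤ e−1 define the polynomial D_{i,k}(x) := ((ζ^k − ζ^i)/e) · x · ∏_{j ∈ {0,…,e−1}, j≠i, j≠k} (x − ζ^j) ∈ ℂ[x], and let D̄_{i,k} be obtained from D_{i,k} by complex-conjugating its coefficients (equivalently, replacing ζ by ζ^{−1}). Then, as an identity in ℂ[x,y]: Σ_{0≤k<i≤e−1} D_{i,k}(x)·D̄_{i,k}(y) = Σ_{j=1}^{e−1} x^j·y^j. -/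
/-!
Partial fractions give, for `0 ≤ k < i < e`,
`D_{i,k}(x) = (1/e) ∑_{n=1}^{e-1} (ζ^{k(e-n)} - ζ^{i(e-n)}) xⁿ`, so `D̄_{i,k}` has coefficients
`(ζ^{kn} - ζ^{in})/e`. The coefficient of `xᵐyⁿ` on the left is then `1/e²` times
`∑_{k<i} (u_k - u_i)(v_k - v_i) = e ∑_k u_k v_k - (∑_k u_k)(∑_k v_k)` with `u_k = ζ^{k(e-m)}`,
`v_k = ζ^{kn}`, and orthogonality of the characters of the cyclic group evaluates this to
`e² δ_{mn}`.
-/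

namespace Stmt18

/-- The degree `Deg(ρ_{i,k})(x) = ((ζ^k - ζ^i)/e) · x · ∏_{j ≠ i,k} (x - ζ^j)` of a
nontrivial unipotent character of the spets attached to the cyclic group of order `e`. -/
noncomputable def Dpoly (e : ℕ) (ζ : ℂ) (i k : ℕ) : Polynomial ℂ :=
  Polynomial.C ((ζ ^ k - ζ ^ i) / (e : ℂ)) * Polynomial.X *
    ∏ j ∈ ((Finset.range e).erase i).erase k, (Polynomial.X - Polynomial.C (ζ ^ j))

end Stmt18

open Finset Polynomial

theorem Finset.sum_range_sum_range_sub_mul_sub {R : Type*} [CommRing R] (u v : ℕ → R) (n : ℕ) :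
    ∑ i ∈ range n, ∑ k ∈ range i, (u k - u i) * (v k - v i) =
      n * ∑ k ∈ range n, u k * v k - (∑ k ∈ range n, u k) * ∑ k ∈ range n, v k := by
  induction n with
  | zero => simp
  | succ n ih =>
    rw [sum_range_succ, ih]
    simp only [sum_range_succ, sub_mul, mul_sub, sum_sub_distrib, ← sum_mul, ← mul_sum,
      sum_const, card_range, nsmul_eq_mul]
    push_cast
    ring

theorem Complex.conj_pow_sub_of_pow_eq_one {z : ℂ} {e n : ℕ} (hz : z ^ e = 1) (hn : n ≤ e) :
    (starRingEnd ℂ) (z ^ (e - n)) = z ^ n := by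
  rcases Nat.eq_zero_or_pos e with rfl | he
  · obtain rfl : n = 0 := by omega
    simp
  have hmul : z ^ (e - n) * z ^ n = 1 := by rw [← pow_add, Nat.sub_add_cancel hn, hz]
  have hnorm : ‖z ^ (e - n)‖ = 1 := by
    rw [norm_pow, Complex.norm_eq_one_of_pow_eq_one hz he.ne', one_pow]
  rw [← Complex.inv_eq_conj hnorm, inv_eq_of_mul_eq_one_right hmul]

theorem Polynomial.X_sub_C_mul_sum_Ico_C_pow_mul_X_pow {R : Type*} [CommRing R] {a : R} {e : ℕ}
    (ha : a ^ e = 1) (he : 1 ≤ e) :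
    (X - C a) * ∑ n ∈ Ico 1 e, C (a ^ (e - n)) * X ^ n = C a * X ^ e - X := by
  have hsum : ∑ n ∈ Ico 1 e, C (a ^ (e - n)) * X ^ n =
      C a * ∑ n ∈ Ico 1 e, X ^ n * C a ^ (e - 1 - n) := by
    rw [mul_sum]
    refine sum_congr rfl fun n hn => ?_
    rw [mem_Ico] at hn
    rw [show e - n = e - 1 - n + 1 by omega, pow_succ', map_mul, map_pow]
    ring
  calc (X - C a) * ∑ n ∈ Ico 1 e, C (a ^ (e - n)) * X ^ n
      = C a * (X ^ e - X ^ 1 * C a ^ (e - 1)) := by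
        rw [hsum, mul_left_comm, mul_geom_sum₂_Ico _ _ he]
    _ = C a * X ^ e - X * C a ^ (e - 1 + 1) := by ring
    _ = C a * X ^ e - X := by rw [Nat.sub_add_cancel he, ← map_pow, ha, map_one, mul_one]

namespace IsPrimitiveRoot

variable {R : Type*} [CommRing R] [IsDomain R] {ζ : R} {e : ℕ}

theorem sum_range_pow_pow (hζ : IsPrimitiveRoot ζ e) (r : ℕ) :
    ∑ k ∈ range e, (ζ ^ r) ^ k = if e ∣ r then (e : R) else 0 := by
  split_ifs with h
  · obtain ⟨c, rfl⟩ := h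
    simp [pow_mul, hζ.pow_eq_one]
  · have hne : ζ ^ r - 1 ≠ 0 := sub_ne_zero.2 fun h' => h ((hζ.pow_eq_one_iff_dvd r).1 h')
    apply mul_left_cancel₀ hne
    rw [mul_geom_sum, pow_right_comm, hζ.pow_eq_one, one_pow, sub_self, mul_zero]

theorem sum_range_sum_range_pow_sub_mul_pow_sub (hζ : IsPrimitiveRoot ζ e) {m n : ℕ}
    (hm : m ∈ Ico 1 e) (hn : n ∈ Ico 1 e) :
    ∑ i ∈ range e, ∑ k ∈ range i,
        ((ζ ^ k) ^ (e - m) - (ζ ^ i) ^ (e - m)) * ((ζ ^ k) ^ n - (ζ ^ i) ^ n) =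
      if m = n then (e : R) ^ 2 else 0 := by
  rw [mem_Ico] at hm hn
  have hdvd : e ∣ e - m + n ↔ m = n := by
    refine ⟨fun h => ?_, fun h => ⟨1, by omega⟩⟩
    have := Nat.eq_of_dvd_of_lt_two_mul (by omega) h (by omega)
    omega
  have hm' : ¬ e ∣ e - m := Nat.not_dvd_of_pos_of_lt (by omega) (by omega)
  have hn' : ¬ e ∣ n := Nat.not_dvd_of_pos_of_lt hn.1 hn.2
  rw [sum_range_sum_range_sub_mul_sub]
  simp only [pow_right_comm ζ _ (e - m), pow_right_comm ζ _ n, ← mul_pow, ← pow_add,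
    hζ.sum_range_pow_pow, hdvd, hm', hn', if_false, mul_zero, sub_zero]
  split_ifs <;> ring

end IsPrimitiveRoot

namespace Stmt18

variable {e : ℕ} {ζ : ℂ} {i k : ℕ}

theorem X_sub_C_mul_X_sub_C_mul_Dpoly (hζ : IsPrimitiveRoot ζ e) (hi : i < e) (hk : k < i) :
    (X - C (ζ ^ i)) * (X - C (ζ ^ k)) * Dpoly e ζ i k =
      C ((ζ ^ k - ζ ^ i) / e) * X * (X ^ e - 1) := by
  have hprod : X ^ e - 1 = ∏ j ∈ range e, (X - C (ζ ^ j)) := by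
    simpa using X_pow_sub_C_eq_prod hζ (by omega) (one_pow e)
  have hk' : k ∈ (range e).erase i := mem_erase.2 ⟨hk.ne, mem_range.2 (hk.trans hi)⟩
  rw [hprod, ← mul_prod_erase _ _ (mem_range.2 hi), ← mul_prod_erase _ _ hk', Dpoly]
  ring

theorem Dpoly_eq_sum (hζ : IsPrimitiveRoot ζ e) (hi : i < e) (hk : k < i) :
    Dpoly e ζ i k = ∑ n ∈ Ico 1 e, C (((ζ ^ k) ^ (e - n) - (ζ ^ i) ^ (e - n)) / e) * X ^ n := by
  set P : ℂ → ℂ[X] := fun a => ∑ n ∈ Ico 1 e, C (a ^ (e - n)) * X ^ n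
  have hP (j : ℕ) : (X - C (ζ ^ j)) * P (ζ ^ j) = C (ζ ^ j) * X ^ e - X :=
    X_sub_C_mul_sum_Ico_C_pow_mul_X_pow (by rw [pow_right_comm, hζ.pow_eq_one, one_pow]) (by omega)
  have hsum : ∑ n ∈ Ico 1 e, C (((ζ ^ k) ^ (e - n) - (ζ ^ i) ^ (e - n)) / e) * X ^ n =
      C (e : ℂ)⁻¹ * (P (ζ ^ k) - P (ζ ^ i)) := by
    simp only [P, mul_sum, ← sum_sub_distrib, div_eq_inv_mul, map_mul, map_sub, mul_sub,
      sub_mul, mul_assoc]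
  apply mul_left_cancel₀ (mul_ne_zero (X_sub_C_ne_zero (ζ ^ i)) (X_sub_C_ne_zero (ζ ^ k)))
  rw [X_sub_C_mul_X_sub_C_mul_Dpoly hζ hi hk, hsum, div_eq_inv_mul, map_mul, map_sub]
  linear_combination -C (e : ℂ)⁻¹ * ((X - C (ζ ^ i)) * hP k - (X - C (ζ ^ k)) * hP i)

theorem coeff_Dpoly (hζ : IsPrimitiveRoot ζ e) (hi : i < e) (hk : k < i) (n : ℕ) :
    (Dpoly e ζ i k).coeff n =
      if n ∈ Ico 1 e then ((ζ ^ k) ^ (e - n) - (ζ ^ i) ^ (e - n)) / e else 0 := by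
  simp only [Dpoly_eq_sum hζ hi hk, finsetSum_coeff, coeff_C_mul_X_pow, sum_ite_eq]

theorem conj_coeff_Dpoly (hζ : IsPrimitiveRoot ζ e) (hi : i < e) (hk : k < i) (n : ℕ) :
    starRingEnd ℂ ((Dpoly e ζ i k).coeff n) =
      if n ∈ Ico 1 e then ((ζ ^ k) ^ n - (ζ ^ i) ^ n) / e else 0 := by
  have hroot (j : ℕ) : (ζ ^ j) ^ e = 1 := by rw [pow_right_comm, hζ.pow_eq_one, one_pow]
  rw [coeff_Dpoly hζ hi hk]
  split_ifs with hn
  · have hne : n ≤ e := (mem_Ico.1 hn).2.le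
    rw [map_div₀, map_sub, Complex.conj_pow_sub_of_pow_eq_one (hroot k) hne,
      Complex.conj_pow_sub_of_pow_eq_one (hroot i) hne, map_natCast]
  · exact map_zero _

theorem sum_coeff_Dpoly_mul_conj_coeff_Dpoly (hζ : IsPrimitiveRoot ζ e) (m n : ℕ) :
    ∑ i ∈ range e, ∑ k ∈ range i,
        (Dpoly e ζ i k).coeff m * starRingEnd ℂ ((Dpoly e ζ i k).coeff n) =
      if m = n ∧ n ∈ Ico 1 e then 1 else 0 := by
  by_cases hm : m ∈ Ico 1 e
  · by_cases hn : n ∈ Ico 1 e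
    · have he : (e : ℂ) ≠ 0 := Nat.cast_ne_zero.2 (Nat.ne_zero_of_lt (mem_Ico.1 hm).2)
      calc _ = (e : ℂ)⁻¹ ^ 2 * ∑ i ∈ range e, ∑ k ∈ range i,
              ((ζ ^ k) ^ (e - m) - (ζ ^ i) ^ (e - m)) * ((ζ ^ k) ^ n - (ζ ^ i) ^ n) := by
            simp only [mul_sum]
            refine sum_congr rfl fun i hi => sum_congr rfl fun k hk => ?_
            rw [coeff_Dpoly hζ (mem_range.1 hi) (mem_range.1 hk), if_pos hm,
              conj_coeff_Dpoly hζ (mem_range.1 hi) (mem_range.1 hk), if_pos hn]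
            ring
        _ = _ := by
            rw [hζ.sum_range_sum_range_pow_sub_mul_pow_sub hm hn]
            split_ifs <;> simp_all
    · rw [if_neg (by tauto)]
      refine sum_eq_zero fun i hi => sum_eq_zero fun k hk => ?_
      rw [conj_coeff_Dpoly hζ (mem_range.1 hi) (mem_range.1 hk), if_neg hn, mul_zero]
  · rw [if_neg (by rintro ⟨rfl, h⟩; exact hm h)]
    refine sum_eq_zero fun i hi => sum_eq_zero fun k hk => ?_
    rw [coeff_Dpoly hζ (mem_range.1 hi) (mem_range.1 hk), if_neg hm, zero_mul]

/-- `x` is the inner and `y` the outer variable of `ℂ[x,y] = (ℂ[x])[y]`. -/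
theorem statement18 (e : ℕ) (he : 1 ≤ e) (ζ : ℂ)
    (hζ : ζ = Complex.exp (2 * Real.pi * Complex.I / (e : ℂ))) :
    (∑ i ∈ Finset.range e, ∑ k ∈ Finset.range i,
        Polynomial.C (Dpoly e ζ i k) *
          Polynomial.map (Polynomial.C : ℂ →+* Polynomial ℂ)
            ((Dpoly e ζ i k).map (starRingEnd ℂ))) =
      ∑ j ∈ Finset.Ico 1 e,
        Polynomial.C ((Polynomial.X : Polynomial ℂ) ^ j) *
          (Polynomial.X : Polynomial (Polynomial ℂ)) ^ j := by
  have hprim : IsPrimitiveRoot ζ e := hζ ▸ Complex.isPrimitiveRoot_exp e (by omega)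
  ext n m
  simp only [finsetSum_coeff, coeff_C_mul, coeff_map, coeff_mul_C, coeff_X_pow, mul_ite, mul_one,
    mul_zero, sum_ite_eq, sum_coeff_Dpoly_mul_conj_coeff_Dpoly hprim]
  split_ifs <;> simp_all [coeff_X_pow]

end Stmt18
end
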